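/- arXiv:2307.13769 — 4 statements merged into one kernel-verified Lean document; each statement's English description precedes it below -/
import Mathlib

section
/- For real parameters a, b and c > 0 with c ≥ max{a, b}, the Gauss hypergeometric series F(a,b;c;z) = Σ_{n≥0} ((a)_n (b)_n / ((c)_n n!)) z^n is nonnegative for all z ∈ [0,1). -/
open Real Set MeasureTheory

/-- Pochhammer symbol (rising factorial) for a real argument. -/
noncomputable def poch (x : ℝ) (n : ℕ) : ℝ := ∏ i ∈ Finset.range n, (x + i)

/-- Gauss hypergeometric series. -/
noncomputable def hyperF (a b c z : ℝ) : ℝ :=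
  ∑' n : ℕ, poch a n * poch b n / (poch c n * (n.factorial : ℝ)) * z ^ n

open Finset Filter

lemma poch_zero (x : ℝ) : poch x 0 = 1 := by simp [poch]

lemma poch_succ (x : ℝ) (n : ℕ) : poch x (n+1) = poch x n * (x + n) := by
  simp [poch, Finset.prod_range_succ]

lemma poch_succ' (x : ℝ) (n : ℕ) : poch x (n+1) = x * poch (x+1) n := by
  simp only [poch]
  rw [Finset.prod_range_succ', mul_comm]
  congr 1
  · push_cast; ring
  · exact Finset.prod_congr rfl (fun i _ => by push_cast; ring)

lemma poch_nonneg {x : ℝ} (hx : 0 ≤ x) (n : ℕ) : 0 ≤ poch x n := by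
  apply Finset.prod_nonneg
  intro i _
  positivity

lemma poch_pos {x : ℝ} (hx : 0 < x) (n : ℕ) : 0 < poch x n := by
  apply Finset.prod_pos
  intro i _
  positivity

lemma abs_poch_le (x : ℝ) (n : ℕ) : |poch x n| ≤ poch |x| n := by
  rw [poch, poch, Finset.abs_prod]
  apply Finset.prod_le_prod (fun i _ => abs_nonneg _)
  intro i _
  calc |x + (i:ℝ)| ≤ |x| + |(i:ℝ)| := abs_add_le _ _
    _ ≤ |x| + i := by rw [Nat.abs_cast]

lemma poch_add (x : ℝ) (k m : ℕ) : poch x (k + m) = poch x k * poch (x + k) m := by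
  induction m with
  | zero => simp [poch_zero]
  | succ m ih =>
      rw [← Nat.add_assoc, poch_succ, ih, poch_succ]
      push_cast; ring

lemma tendsto_ratio (α β : ℝ) (hβ : 0 < β) :
    Tendsto (fun n : ℕ => (α + n) / (β + n)) atTop (nhds 1) := by
  have h1 : Tendsto (fun n : ℕ => β + (n:ℝ)) atTop atTop :=
    tendsto_atTop_add_const_left _ β tendsto_natCast_atTop_atTop
  have h2 : Tendsto (fun n : ℕ => (α - β) / (β + (n:ℝ))) atTop (nhds 0) :=
    Tendsto.div_atTop tendsto_const_nhds h1
  have h3 : Tendsto (fun n : ℕ => 1 + (α - β) / (β + (n:ℝ))) atTop (nhds (1 + 0)) :=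
    tendsto_const_nhds.add h2
  rw [add_zero] at h3
  apply h3.congr
  intro n
  have hne : β + (n:ℝ) ≠ 0 := by positivity
  field_simp
  ring

lemma summable_norm_hterm {c z : ℝ} (x y : ℝ) (hc : 0 < c) (hz0 : 0 ≤ z) (hz1 : z < 1) :
    Summable (fun n : ℕ => ‖poch x n * poch y n / (poch c n * (n.factorial:ℝ)) * z ^ n‖) := by
  set r := (1+z)/2 with hr
  have hr1 : r < 1 := by rw [hr]; linarith
  have hzr : z < r := by rw [hr]; linarith
  apply summable_of_ratio_norm_eventually_le hr1
  have hq : Tendsto (fun n : ℕ => (|x| + n)/(c + n) * ((|y| + n)/(1 + n)) * z)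
      atTop (nhds z) := by
    have := ((tendsto_ratio |x| c hc).mul (tendsto_ratio |y| 1 one_pos)).mul_const z
    simpa using this
  filter_upwards [hq.eventually_lt_const hzr] with n hn
  have hcn : (0:ℝ) < c + n := by positivity
  have hn1 : (0:ℝ) < 1 + (n:ℝ) := by positivity
  have hpc : (0:ℝ) < poch c n := poch_pos hc n
  have hfac : (0:ℝ) < (n.factorial : ℝ) := by positivity
  have heq : poch x (n+1) * poch y (n+1) / (poch c (n+1) * ((n+1).factorial:ℝ)) * z ^ (n+1)
      = (poch x n * poch y n / (poch c n * (n.factorial:ℝ)) * z ^ n)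
        * ((x + n) * (y + n) / ((c + n) * (1 + n)) * z) := by
    rw [poch_succ, poch_succ, poch_succ, Nat.factorial_succ]
    push_cast
    field_simp
    ring
  rw [norm_norm, norm_norm, heq, norm_mul, Real.norm_eq_abs ((x + n) * (y + n) / ((c + n) * (1 + n)) * z)]
  rw [mul_comm (r : ℝ) _]
  apply mul_le_mul_of_nonneg_left _ (norm_nonneg _)
  have habs : |(x + ↑n) * (y + ↑n) / ((c + ↑n) * (1 + ↑n)) * z|
      = |x + (n:ℝ)| * |y + (n:ℝ)| / ((c + n) * (1 + n)) * z := by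
    rw [abs_mul, abs_div, abs_mul, abs_mul, abs_of_nonneg hz0,
      abs_of_pos hcn, abs_of_pos hn1]
  rw [habs]
  have hxb : |x + (n:ℝ)| ≤ |x| + n := by
    calc |x + (n:ℝ)| ≤ |x| + |(n:ℝ)| := abs_add_le _ _
      _ = |x| + n := by rw [Nat.abs_cast]
  have hyb : |y + (n:ℝ)| ≤ |y| + n := by
    calc |y + (n:ℝ)| ≤ |y| + |(n:ℝ)| := abs_add_le _ _
      _ = |y| + n := by rw [Nat.abs_cast]
  have step1 : |x + (n:ℝ)| * |y + (n:ℝ)| / ((c + n) * (1 + n)) * z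
      ≤ (|x| + n) * (|y| + n) / ((c + n) * (1 + n)) * z := by
    gcongr
  refine le_trans step1 ?_
  have : (|x| + (n:ℝ)) * (|y| + n) / ((c + n) * (1 + n)) * z
      = (|x| + n)/(c + n) * ((|y| + n)/(1 + n)) * z := by
    rw [div_mul_div_comm]
  rw [this]
  exact le_of_lt hn

lemma vandermonde (x y : ℝ) (n : ℕ) :
    ∑ k ∈ range (n+1), (n.choose k : ℝ) * (poch x k * poch y (n-k)) = poch (x+y) n := by
  induction n with
  | zero => simp [poch_zero]
  | succ n ih =>
    have key : ∀ k ∈ range (n+1),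
        ((n+1).choose (k+1) : ℝ) * (poch x (k+1) * poch y (n+1-(k+1)))
        = (n.choose k : ℝ) * (poch x (k+1) * poch y (n-k))
          + ((n.choose (k+1) : ℝ) * (poch x (k+1) * poch y (n+1-(k+1)))) := by
      intro k hk
      rw [Nat.choose_succ_succ, Nat.succ_sub_succ]
      push_cast
      ring
    rw [Finset.sum_range_succ']
    rw [Finset.sum_congr rfl key, Finset.sum_add_distrib]
    have e2 : ∑ k ∈ range (n+1), ((n.choose (k+1) : ℝ) * (poch x (k+1) * poch y (n+1-(k+1))))
        + ((n+1).choose 0 : ℝ) * (poch x 0 * poch y (n+1-0))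
        = ∑ k ∈ range (n+2), ((n.choose k : ℝ) * (poch x k * poch y (n+1-k))) := by
      rw [Finset.sum_range_succ' (fun k => ((n.choose k : ℝ) * (poch x k * poch y (n+1-k)))) (n+1)]
      norm_num
    rw [add_assoc, e2]
    rw [Finset.sum_range_succ (fun k => ((n.choose k : ℝ) * (poch x k * poch y (n+1-k)))) (n+1)]
    have hz : ((n.choose (n+1)) : ℝ) = 0 := by simp
    rw [hz, zero_mul, add_zero]
    have e3 : ∀ k ∈ range (n+1),
        (n.choose k : ℝ) * (poch x (k+1) * poch y (n-k))
          + (n.choose k : ℝ) * (poch x k * poch y (n+1-k))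
        = (x + y + n) * ((n.choose k : ℝ) * (poch x k * poch y (n-k))) := by
      intro k hk
      have hkn : k ≤ n := by
        have := Finset.mem_range.mp hk; omega
      have h1 : n + 1 - k = (n - k) + 1 := by omega
      have h2 : ((n - k : ℕ) : ℝ) = (n : ℝ) - k := by
        have : ((n - k : ℕ) : ℝ) + k = n := by
          rw [← Nat.cast_add]; congr 1; omega
        linarith
      rw [h1, poch_succ, poch_succ, h2]
      ring
    rw [← Finset.sum_add_distrib, Finset.sum_congr rfl e3, ← Finset.mul_sum, ih, poch_succ]
    push_cast
    ring

noncomputable def sT (a b c : ℝ) (n k : ℕ) : ℝ :=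
  (n.choose k : ℝ) * (poch (c-a) k * poch (c-b) k *
    (poch (a+b-c) (n-k) * poch (c+(k:ℝ)) (n-k)))

lemma sT_key (a b c : ℝ) (n k : ℕ) (hk : k ≤ n) :
    sT a b c (n+1) (k+1) = (a+n)*(b+n) * sT a b c n (k+1)
      + ((c-a+(k:ℝ))*(c-b+(k:ℝ)) * sT a b c n k
         - (c-a+((k+1:ℕ):ℝ))*(c-b+((k+1:ℕ):ℝ)) * sT a b c n (k+1)) := by
  rcases eq_or_lt_of_le hk with rfl | hlt
  · have hz : sT a b c k (k+1) = 0 := by simp [sT]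
    rw [hz]
    simp only [sT, Nat.choose_self, Nat.succ_sub_succ, Nat.sub_self]
    rw [poch_succ, poch_succ]
    simp [poch_zero]
    push_cast
    ring
  · obtain ⟨m, rfl⟩ : ∃ m, n = k + m + 1 := ⟨n - k - 1, by omega⟩
    have h1 : k + m + 1 + 1 - (k+1) = m + 1 := by omega
    have h2 : k + m + 1 - (k+1) = m := by omega
    have h3 : k + m + 1 - k = m + 1 := by omega
    have hrel : (((k+m+1).choose (k+1)) : ℝ) * (k+1) = (((k+m+1).choose k) : ℝ) * (m+1) := by
      have h := Nat.choose_succ_right_eq (k+m+1) k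
      rw [h3] at h
      exact_mod_cast congrArg (fun t : ℕ => (t : ℝ)) h
    simp only [sT, h1, h2, h3]
    rw [Nat.choose_succ_succ (k+m+1) k]
    have e1 : c + ((k:ℝ)+1) = c + (k:ℝ) + 1 := by ring
    push_cast
    rw [e1]
    rw [poch_succ (c-a) k, poch_succ (c-b) k, poch_succ (a+b-c) m,
      poch_succ (c+(k:ℝ)+1) m, poch_succ' (c+(k:ℝ)) m]
    push_cast
    linear_combination (-(poch (c-a) k * poch (c-b) k * poch (a+b-c) m * poch (c+(k:ℝ)+1) m
      * (c-a+(k:ℝ)) * (c-b+(k:ℝ)) * (a+b-c+(m:ℝ)))) * hrel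

lemma saalschutz (a b c : ℝ) (n : ℕ) :
    ∑ k ∈ Finset.range (n+1), sT a b c n k = poch a n * poch b n := by
  induction n with
  | zero => simp [sT, poch_zero]
  | succ n ih =>
    rw [Finset.sum_range_succ']
    rw [Finset.sum_congr rfl (fun k hk =>
      sT_key a b c n k (Nat.lt_succ_iff.mp (Finset.mem_range.mp hk)))]
    rw [Finset.sum_add_distrib]
    rw [Finset.sum_range_sub' (fun j => (c-a+(j:ℝ))*(c-b+(j:ℝ)) * sT a b c n j) (n+1)]
    rw [← Finset.mul_sum]
    have htop : sT a b c n (n+1) = 0 := by simp [sT]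
    have hsum : ∑ k ∈ Finset.range (n+1), sT a b c n (k+1)
        = poch a n * poch b n - sT a b c n 0 := by
      have h5 := Finset.sum_range_succ' (fun k => sT a b c n k) (n+1)
      have h6 := Finset.sum_range_succ (fun k => sT a b c n k) (n+1)
      rw [ih, htop] at h6
      rw [h6] at h5
      linarith [h5]
    rw [hsum, htop]
    have h0 : sT a b c n 0 = poch (a+b-c) n * poch c n := by
      simp [sT, poch_zero]
    have h0' : sT a b c (n+1) 0 = poch (a+b-c) n * (a+b-c+n) * (poch c n * (c+n)) := by
      simp [sT, poch_zero]
      rw [poch_succ, poch_succ]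
    rw [h0, h0']
    rw [poch_succ a n, poch_succ b n]
    push_cast
    ring

lemma fact_cast_eq (k m : ℕ) :
    (((k+m).factorial : ℝ)) = ((k+m).choose k : ℝ) * k.factorial * m.factorial := by
  have h := Nat.add_choose_mul_factorial_mul_factorial k m
  rw [Nat.choose_symm_add]
  exact_mod_cast h.symm

lemma summable_norm_binom {z : ℝ} (s : ℝ) (hz0 : 0 ≤ z) (hz1 : z < 1) :
    Summable (fun m : ℕ => ‖poch s m / (m.factorial:ℝ) * z ^ m‖) := by
  apply (summable_norm_hterm s 1 one_pos hz0 hz1).congr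
  intro m
  congr 1
  have h1 : poch (1:ℝ) m ≠ 0 := ne_of_gt (poch_pos one_pos m)
  field_simp

lemma binom_coeff (s t z : ℝ) (n : ℕ) :
    ∑ k ∈ range (n+1), (poch s k / (k.factorial:ℝ) * z^k)
      * (poch t (n-k) / ((n-k).factorial:ℝ) * z^(n-k))
    = poch (s+t) n * (z^n / (n.factorial:ℝ)) := by
  have key : ∀ k ∈ range (n+1),
      (poch s k / (k.factorial:ℝ) * z^k) * (poch t (n-k) / ((n-k).factorial:ℝ) * z^(n-k))
      = (n.choose k : ℝ) * (poch s k * poch t (n-k)) * (z^n / (n.factorial:ℝ)) := by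
    intro k hk
    obtain ⟨m, rfl⟩ : ∃ m, n = k + m := ⟨n - k, by have := Finset.mem_range.mp hk; omega⟩
    simp only [Nat.add_sub_cancel_left]
    have hch : (0:ℝ) < ((k+m).choose k : ℝ) := by
      exact_mod_cast Nat.choose_pos (Nat.le_add_right k m)
    have hkf : ((k.factorial:ℝ)) ≠ 0 := by positivity
    have hmf : ((m.factorial:ℝ)) ≠ 0 := by positivity
    rw [fact_cast_eq k m, pow_add]
    field_simp
  rw [Finset.sum_congr rfl key, ← Finset.sum_mul, vandermonde]

lemma hyper_coeff (a b c z : ℝ) (hc : 0 < c) (n : ℕ) :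
    ∑ k ∈ range (n+1),
      (poch (c-a) k * poch (c-b) k / (poch c k * (k.factorial:ℝ)) * z^k)
      * (poch (a+b-c) (n-k) / (((n-k).factorial:ℝ)) * z^(n-k))
    = poch a n * poch b n / (poch c n * (n.factorial:ℝ)) * z^n := by
  have key : ∀ k ∈ range (n+1),
      (poch (c-a) k * poch (c-b) k / (poch c k * (k.factorial:ℝ)) * z^k)
      * (poch (a+b-c) (n-k) / (((n-k).factorial:ℝ)) * z^(n-k))
      = sT a b c n k * (z^n / (poch c n * (n.factorial:ℝ))) := by
    intro k hk
    obtain ⟨m, rfl⟩ : ∃ m, n = k + m := ⟨n - k, by have := Finset.mem_range.mp hk; omega⟩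
    simp only [sT, Nat.add_sub_cancel_left]
    have hck : (0:ℝ) < poch c k := poch_pos hc k
    have hckm : (0:ℝ) < poch (c + (k:ℝ)) m :=
      poch_pos (by positivity) m
    have hch : (0:ℝ) < ((k+m).choose k : ℝ) := by
      exact_mod_cast Nat.choose_pos (Nat.le_add_right k m)
    have hkf : ((k.factorial:ℝ)) ≠ 0 := by positivity
    have hmf : ((m.factorial:ℝ)) ≠ 0 := by positivity
    rw [fact_cast_eq k m, pow_add, poch_add c k m]
    field_simp
  rw [Finset.sum_congr rfl key, ← Finset.sum_mul, saalschutz]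
  ring

lemma binom_tsum_pos (s z : ℝ) (hz0 : 0 ≤ z) (hz1 : z < 1) :
    0 < ∑' m : ℕ, poch s m / (m.factorial:ℝ) * z ^ m := by
  have base : ∀ t : ℝ, 0 ≤ t → 0 < ∑' m : ℕ, poch t m / (m.factorial:ℝ) * z ^ m := by
    intro t ht
    apply Summable.tsum_pos ((summable_norm_binom t hz0 hz1).of_norm)
      (fun m => by
        have := poch_nonneg ht m
        positivity) 0
    simp [poch_zero]
  rcases le_or_gt 0 s with hs | hs
  · exact base s hs
  · have hpos : 0 < ∑' m : ℕ, poch (-s) m / (m.factorial:ℝ) * z ^ m :=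
      base (-s) (by linarith)
    have hprod : (∑' m : ℕ, poch s m / (m.factorial:ℝ) * z ^ m)
        * (∑' m : ℕ, poch (-s) m / (m.factorial:ℝ) * z ^ m) = 1 := by
      rw [tsum_mul_tsum_eq_tsum_sum_range_of_summable_norm
        (summable_norm_binom s hz0 hz1) (summable_norm_binom (-s) hz0 hz1)]
      have e1 : ∀ n : ℕ, ∑ k ∈ range (n+1),
          (poch s k / (k.factorial:ℝ) * z^k) * (poch (-s) (n-k) / (((n-k).factorial:ℝ)) * z^(n-k))
          = poch 0 n * (z^n / (n.factorial:ℝ)) := by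
        intro n
        rw [binom_coeff s (-s) z n]
        norm_num
      rw [tsum_congr e1]
      rw [tsum_eq_single 0 (fun n hn => by
        obtain ⟨m, rfl⟩ : ∃ m, n = m + 1 := ⟨n - 1, by omega⟩
        rw [poch_succ' 0 m]
        simp)]
      simp [poch_zero]
    have h2 : (∑' m : ℕ, poch s m / (m.factorial:ℝ) * z ^ m)
        = 1 / (∑' m : ℕ, poch (-s) m / (m.factorial:ℝ) * z ^ m) :=
      eq_one_div_of_mul_eq_one_right (by rw [mul_comm] at hprod; exact hprod)
    rw [h2]
    positivity

theorem hyperF_nonneg (a b c : ℝ) (hc : 0 < c) (hac : a ≤ c) (hbc : b ≤ c) :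
    ∀ z ∈ Set.Ico (0 : ℝ) 1, 0 ≤ hyperF a b c z := by
  rintro z ⟨hz0, hz1⟩
  have hg : Summable (fun k : ℕ =>
      ‖poch (c-a) k * poch (c-b) k / (poch c k * (k.factorial:ℝ)) * z ^ k‖) :=
    summable_norm_hterm (c-a) (c-b) hc hz0 hz1
  have hf : Summable (fun m : ℕ => ‖poch (a+b-c) m / (m.factorial:ℝ) * z ^ m‖) :=
    summable_norm_binom (a+b-c) hz0 hz1
  have hmain : hyperF a b c z
      = (∑' k : ℕ, poch (c-a) k * poch (c-b) k / (poch c k * (k.factorial:ℝ)) * z ^ k)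
        * (∑' m : ℕ, poch (a+b-c) m / (m.factorial:ℝ) * z ^ m) := by
    rw [hyperF, tsum_mul_tsum_eq_tsum_sum_range_of_summable_norm hg hf]
    exact (tsum_congr (fun n => (hyper_coeff a b c z hc n).symm))
  rw [hmain]
  apply mul_nonneg
  · apply tsum_nonneg
    intro k
    have h1 := poch_nonneg (by linarith : (0:ℝ) ≤ c - a) k
    have h2 := poch_nonneg (by linarith : (0:ℝ) ≤ c - b) k
    have h3 := poch_pos hc k
    positivity
  · exact le_of_lt (binom_tsum_pos (a+b-c) z hz0 hz1)
end

section
/- Let a, b ∈ ℝ, c ∈ ℝ not a nonpositive integer, with c - a - b > 0. Then the hypergeometric series converges at z = 1 and F(a,b;c;1) = Γ(c)Γ(c-a-b)/(Γ(c-a)Γ(c-b)) (Gauss's summation theorem). -/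
open Real Set MeasureTheory

open Filter Topology

namespace GaussAux

noncomputable def u (a b c : ℝ) (n : ℕ) : ℝ :=
  poch a n * poch b n / (poch c n * (n.factorial : ℝ))

lemma poch_zero (x : ℝ) : poch x 0 = 1 := by simp [poch]

lemma poch_succ (x : ℝ) (n : ℕ) : poch x (n + 1) = poch x n * (x + n) := by
  simp [poch, Finset.prod_range_succ]

lemma poch_shift (x : ℝ) (n : ℕ) : poch x n * (x + n) = x * poch (x + 1) n := by
  rw [← poch_succ]
  unfold poch
  rw [Finset.prod_range_succ']
  push_cast
  ring_nf

lemma poch_ne_zero {c : ℝ} (hc : ∀ n : ℕ, c ≠ -(n : ℝ)) (n : ℕ) : poch c n ≠ 0 := by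
  unfold poch
  refine Finset.prod_ne_zero_iff.2 fun i _ => ?_
  intro hi
  exact hc i (by linarith)

lemma poch_pos {x : ℝ} (hx : 0 < x) (n : ℕ) : 0 < poch x n := by
  refine Finset.prod_pos fun i _ => by positivity

lemma one_le_poch {x : ℝ} (hx : 1 ≤ x) (n : ℕ) : 1 ≤ poch x n := by
  induction n with
  | zero => simp [poch_zero]
  | succ k ih =>
    rw [poch_succ]
    have : (0:ℝ) ≤ (k:ℕ) := Nat.cast_nonneg k
    nlinarith

lemma le_poch {x : ℝ} (hx : 1 ≤ x) {n : ℕ} (hn : 1 ≤ n) : x ≤ poch x n := by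
  obtain ⟨k, rfl⟩ := Nat.exists_eq_add_of_le hn
  have h1 : poch x (1 + k) = x * poch (x + 1) k := by
    rw [add_comm 1 k, poch_succ, poch_shift]
  rw [h1]
  nlinarith [one_le_poch (by linarith : (1:ℝ) ≤ x + 1) k]

lemma u_zero (a b c : ℝ) : u a b c 0 = 1 := by simp [u, poch_zero]

lemma u_succ (a b c : ℝ) (hc : ∀ n : ℕ, c ≠ -(n : ℝ)) (n : ℕ) :
    u a b c (n + 1) = u a b c n * ((a + n) * (b + n) / ((c + n) * (n + 1))) := by
  have h1 : poch c n ≠ 0 := poch_ne_zero hc n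
  have h2 : ((c:ℝ) + n) ≠ 0 := fun hh => hc n (by linarith)
  have h3 : ((n.factorial : ℕ) : ℝ) ≠ 0 := by exact_mod_cast (Nat.factorial_ne_zero n)
  have h4 : ((n:ℝ) + 1) ≠ 0 := by positivity
  rw [u, u, poch_succ, poch_succ, poch_succ]
  have hfact : (((n+1).factorial : ℕ) : ℝ) = (n.factorial : ℝ) * ((n:ℝ) + 1) := by
    rw [Nat.factorial_succ]; push_cast; ring
  rw [hfact]
  field_simp


/-- Key decay estimate: `|u n| ≤ C n^(-s)` for any `1 ≤ s < 1 + (c-a-b)`. -/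
lemma decay (a b c : ℝ) (hc : ∀ n : ℕ, c ≠ -(n : ℝ)) {s : ℝ}
    (hs1 : 1 ≤ s) (hs2 : s < 1 + (c - a - b)) :
    ∃ C : ℝ, 0 < C ∧ ∀ n : ℕ, 1 ≤ n → |u a b c n| ≤ C * (n : ℝ) ^ (-s) := by
  set ε : ℝ := (c - a - b) + 1 - s with hε
  have hεpos : 0 < ε := by simp only [hε]; linarith
  -- choose N
  obtain ⟨N, hN⟩ := exists_nat_ge (max (|a| + |b| + |c| + s + 1)
    ((|a * b| + |c * (1 - s)| + 1) / ε))
  have hN1 : (1:ℝ) ≤ N := by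
    have := le_trans (le_max_left _ _) hN
    have h0 : 0 ≤ |a| + |b| + |c| := by positivity
    linarith
  have hNn : 1 ≤ N := by exact_mod_cast hN1
  -- the one-step estimate
  have step : ∀ n : ℕ, N ≤ n →
      |u a b c (n+1)| * ((n:ℝ)+1) ^ s ≤ |u a b c n| * (n:ℝ) ^ s := by
    intro n hn
    have hnR : (N:ℝ) ≤ n := by exact_mod_cast hn
    have hmax := le_trans (le_max_left _ _) hN
    have hdivb := le_trans (le_max_right _ _) hN
    have hna : 0 < a + n := by
      have := abs_le.1 (le_refl |a|) |>.1
      have h0 : 0 ≤ |b| := abs_nonneg b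
      have h1 : 0 ≤ |c| := abs_nonneg c
      nlinarith [neg_abs_le a]
    have hnb : 0 < b + n := by
      have h0 : 0 ≤ |a| := abs_nonneg a
      have h1 : 0 ≤ |c| := abs_nonneg c
      nlinarith [neg_abs_le b]
    have hnc : 0 < c + n := by
      have h0 : 0 ≤ |a| := abs_nonneg a
      have h1 : 0 ≤ |b| := abs_nonneg b
      nlinarith [neg_abs_le c]
    have hn1 : (0:ℝ) < (n:ℝ) + 1 := by linarith
    have hn0 : (0:ℝ) < (n:ℝ) := by linarith
    -- quadratic estimate : (a+n)(b+n) ≤ (c+n)(n+1-s)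
    have quad : (a + n) * (b + n) ≤ (c + n) * ((n:ℝ) + 1 - s) := by
      have hdivb' : (|a * b| + |c * (1 - s)| + 1) ≤ ε * n := by
        rw [div_le_iff₀ hεpos] at hdivb
        nlinarith
      nlinarith [le_abs_self (a * b), neg_abs_le (c * (1 - s)), le_abs_self (c * (1-s))]
    -- Bernoulli : (n/(n+1))^s ≥ 1 - s/(n+1)
    have bern : 1 - s / ((n:ℝ)+1) ≤ ((n:ℝ) / ((n:ℝ)+1)) ^ s := by
      have h1 : (-1:ℝ) ≤ -(1 / ((n:ℝ)+1)) := by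
        rw [neg_le_neg_iff]
        rw [div_le_one hn1]; linarith
      have := one_add_mul_self_le_rpow_one_add h1 hs1
      have heq : (1:ℝ) + -(1 / ((n:ℝ)+1)) = (n:ℝ) / ((n:ℝ)+1) := by
        field_simp
        ring
      rw [heq] at this
      calc 1 - s / ((n:ℝ)+1) = 1 + s * -(1 / ((n:ℝ)+1)) := by ring
        _ ≤ _ := this
    -- recurrence in absolute value
    have hrec := u_succ a b c hc n
    have habs : |u a b c (n+1)| = |u a b c n| * ((a + n) * (b + n) / ((c + n) * ((n:ℝ)+1))) := by
      rw [hrec, abs_mul,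
        abs_of_nonneg (show (0:ℝ) ≤ (a + n) * (b + n) / ((c + n) * ((n:ℝ)+1)) by positivity)]
    rw [habs]
    have hratio : (a + n) * (b + n) / ((c + n) * ((n:ℝ)+1)) ≤ ((n:ℝ) / ((n:ℝ)+1)) ^ s := by
      rw [div_le_iff₀ (by positivity)]
      calc (a + n) * (b + n) ≤ (c + n) * ((n:ℝ) + 1 - s) := quad
        _ = (c + n) * ((n:ℝ)+1) * (1 - s / ((n:ℝ)+1)) := by field_simp
        _ ≤ (c + n) * ((n:ℝ)+1) * (((n:ℝ) / ((n:ℝ)+1)) ^ s) := by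
            apply mul_le_mul_of_nonneg_left bern (by positivity)
        _ = ((n:ℝ) / ((n:ℝ)+1)) ^ s * ((c + n) * ((n:ℝ)+1)) := by ring
    have hpow : ((n:ℝ) / ((n:ℝ)+1)) ^ s * ((n:ℝ)+1) ^ s = (n:ℝ) ^ s := by
      rw [Real.div_rpow hn0.le hn1.le]
      field_simp
    calc |u a b c n| * ((a + n) * (b + n) / ((c + n) * ((n:ℝ)+1))) * ((n:ℝ)+1) ^ s
        ≤ |u a b c n| * (((n:ℝ) / ((n:ℝ)+1)) ^ s) * ((n:ℝ)+1) ^ s := by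
          apply mul_le_mul_of_nonneg_right
            (mul_le_mul_of_nonneg_left hratio (abs_nonneg _)) (by positivity)
      _ = |u a b c n| * ((n:ℝ) ^ s) := by rw [mul_assoc, hpow]
  -- iterate: for n ≥ N, |u n| n^s ≤ |u N| N^s
  have mono : ∀ n : ℕ, N ≤ n → |u a b c n| * (n:ℝ) ^ s ≤ |u a b c N| * (N:ℝ) ^ s := by
    intro n hn
    induction n, hn using Nat.le_induction with
    | base => exact le_refl _
    | succ k hk ih =>
      have hs := step k hk
      have : ((k:ℝ) + 1) = ((k+1 : ℕ) : ℝ) := by push_cast; ring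
      rw [this] at hs
      exact le_trans hs ih
  set C := (∑ k ∈ Finset.range (N+1), |u a b c k| * (k:ℝ) ^ s) + 1 with hC
  have hterm : ∀ k ∈ Finset.range (N+1), 0 ≤ |u a b c k| * (k:ℝ) ^ s := by
    intro k _; positivity
  have hCpos : 0 < C := by
    have := Finset.sum_nonneg hterm
    simp only [hC]; linarith
  have hbound : ∀ n : ℕ, 1 ≤ n → |u a b c n| * (n:ℝ) ^ s ≤ C := by
    intro n hn
    rcases le_or_gt n N with hle | hlt
    · have h1 : |u a b c n| * (n:ℝ) ^ s ≤ ∑ k ∈ Finset.range (N+1), |u a b c k| * (k:ℝ) ^ s :=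
        Finset.single_le_sum hterm (by simp; omega)
      simp only [hC]; linarith
    · have h1 := mono n hlt.le
      have h2 : |u a b c N| * (N:ℝ) ^ s ≤ ∑ k ∈ Finset.range (N+1), |u a b c k| * (k:ℝ) ^ s :=
        Finset.single_le_sum hterm (by simp)
      simp only [hC]; linarith
  refine ⟨C, hCpos, fun n hn => ?_⟩
  have hn0 : (0:ℝ) < (n:ℝ) := by exact_mod_cast Nat.lt_of_lt_of_le Nat.zero_lt_one hn
  have hp : (0:ℝ) < (n:ℝ) ^ s := Real.rpow_pos_of_pos hn0 s
  rw [Real.rpow_neg hn0.le, ← div_eq_mul_inv, le_div_iff₀ hp]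
  exact hbound n hn

lemma summable_u (a b c : ℝ) (hc : ∀ n : ℕ, c ≠ -(n : ℝ)) (h : 0 < c - a - b) :
    Summable (u a b c) := by
  set s : ℝ := 1 + min 1 (c - a - b) / 2 with hs
  have hm : 0 < min 1 (c - a - b) := lt_min one_pos h
  have hm1 : min 1 (c - a - b) ≤ c - a - b := min_le_right _ _
  have hs1 : 1 ≤ s := by simp only [hs]; linarith
  have hs2 : s < 1 + (c - a - b) := by simp only [hs]; linarith
  obtain ⟨C, hCpos, hC⟩ := decay a b c hc hs1 hs2
  have hsum : Summable (fun n : ℕ => C * (n:ℝ) ^ (-s)) := by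
    refine Summable.mul_left C (Real.summable_nat_rpow.2 (by simp only [hs]; linarith))
  refine Summable.of_norm_bounded_eventually_nat hsum ?_
  filter_upwards [eventually_ge_atTop 1] with n hn
  simpa [Real.norm_eq_abs] using hC n hn

/-- n² u_n → 0 when c - a - b > 1. -/
lemma sq_mul_u_tendsto (a b c : ℝ) (hc : ∀ n : ℕ, c ≠ -(n : ℝ)) (h : 1 < c - a - b) :
    Tendsto (fun n : ℕ => ((n:ℝ))^(2:ℝ) * |u a b c n|) atTop (𝓝 0) := by
  set s : ℝ := 2 + min 1 (c - a - b - 1) / 2 with hs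
  have hm : 0 < min 1 (c - a - b - 1) := lt_min one_pos (by linarith)
  have hm1 : min 1 (c - a - b - 1) ≤ c - a - b - 1 := min_le_right _ _
  have hs1 : 1 ≤ s := by simp only [hs]; linarith
  have hs2 : s < 1 + (c - a - b) := by simp only [hs]; linarith
  obtain ⟨C, hCpos, hC⟩ := decay a b c hc hs1 hs2
  have hlim : Tendsto (fun n : ℕ => C * (n:ℝ) ^ (2 - s)) atTop (𝓝 0) := by
    have h1 : Tendsto (fun x : ℝ => x ^ (-(s - 2))) atTop (𝓝 0) :=
      tendsto_rpow_neg_atTop (by simp only [hs]; linarith)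
    have h2 : Tendsto (fun n : ℕ => ((n:ℝ)) ^ (-(s-2))) atTop (𝓝 0) :=
      h1.comp tendsto_natCast_atTop_atTop
    have h3 := h2.const_mul C
    simpa [mul_zero, show -(s-2) = 2 - s by ring] using h3
  apply squeeze_zero' (g := fun n : ℕ => C * (n:ℝ) ^ (2 - s))
  · filter_upwards [eventually_ge_atTop 1] with n hn
    positivity
  · filter_upwards [eventually_ge_atTop 1] with n hn
    have hn0 : (0:ℝ) < (n:ℝ) := by exact_mod_cast Nat.lt_of_lt_of_le Nat.zero_lt_one hn
    have := hC n hn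
    calc ((n:ℝ))^(2:ℝ) * |u a b c n| ≤ ((n:ℝ))^(2:ℝ) * (C * (n:ℝ) ^ (-s)) := by
          apply mul_le_mul_of_nonneg_left this (by positivity)
      _ = C * (n:ℝ) ^ (2 - s) := by
          rw [show (2:ℝ) - s = 2 + (-s) by ring, Real.rpow_add hn0]
          ring
  · exact hlim

lemma hc_succ {c : ℝ} (hc : ∀ n : ℕ, c ≠ -(n : ℝ)) : ∀ n : ℕ, c + 1 ≠ -(n : ℝ) := by
  intro n hn
  exact hc (n+1) (by push_cast; linarith)

lemma c_mul_u (a b c : ℝ) (hc : ∀ n : ℕ, c ≠ -(n : ℝ)) (n : ℕ) :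
    c * u a b c n = (c + n) * u a b (c + 1) n := by
  have key := poch_shift c n
  have h1 : poch c n ≠ 0 := poch_ne_zero hc n
  have h2 : poch (c+1) n ≠ 0 := poch_ne_zero (hc_succ hc) n
  have h3 : ((n.factorial : ℕ) : ℝ) ≠ 0 := by exact_mod_cast (Nat.factorial_ne_zero n)
  rw [u, u]
  field_simp
  linear_combination (-(poch a n * poch b n)) * key

lemma summable_nat_mul_u (a b c : ℝ) (hc : ∀ n : ℕ, c ≠ -(n : ℝ)) (h : 1 < c - a - b) :
    Summable (fun n : ℕ => (n:ℝ) * u a b c n) := by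
  set s : ℝ := 2 + min 1 (c - a - b - 1) / 2 with hs
  have hm : 0 < min 1 (c - a - b - 1) := lt_min one_pos (by linarith)
  have hm1 : min 1 (c - a - b - 1) ≤ c - a - b - 1 := min_le_right _ _
  have hs1 : 1 ≤ s := by simp only [hs]; linarith
  have hs2 : s < 1 + (c - a - b) := by simp only [hs]; linarith
  obtain ⟨C, hCpos, hC⟩ := decay a b c hc hs1 hs2
  have hsum : Summable (fun n : ℕ => C * (n:ℝ) ^ (1 - s)) := by
    refine Summable.mul_left C (Real.summable_nat_rpow.2 (by simp only [hs]; linarith))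
  refine Summable.of_norm_bounded_eventually_nat hsum ?_
  filter_upwards [eventually_ge_atTop 1] with n hn
  have hn0 : (0:ℝ) < (n:ℝ) := by exact_mod_cast Nat.lt_of_lt_of_le Nat.zero_lt_one hn
  have := hC n hn
  calc ‖(n:ℝ) * u a b c n‖ = (n:ℝ) * |u a b c n| := by
        rw [Real.norm_eq_abs, abs_mul, abs_of_nonneg hn0.le]
    _ ≤ (n:ℝ) * (C * (n:ℝ) ^ (-s)) := mul_le_mul_of_nonneg_left this hn0.le
    _ = C * (n:ℝ) ^ (1 - s) := by
        rw [show (1:ℝ) - s = 1 + (-s) by ring, Real.rpow_add hn0, Real.rpow_one]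
        ring

lemma contiguous (a b c : ℝ) (hc : ∀ n : ℕ, c ≠ -(n : ℝ)) (h : 0 < c - a - b) :
    c * (c - a - b) * (∑' n, u a b c n) = (c - a) * (c - b) * (∑' n, u a b (c + 1) n) := by
  have hc1 := hc_succ hc
  have h1 : 0 < (c + 1) - a - b := by linarith
  have S := summable_u a b c hc h
  have S1 := summable_u a b (c + 1) hc1 h1
  set v : ℕ → ℝ := u a b (c + 1) with hv
  set f : ℕ → ℝ := fun n => ((c - a - b) * n - a * b) * v n with hf
  set w : ℕ → ℝ := fun n => -(n:ℝ) * (c + n) * v n with hw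
  -- telescoping partial sums
  have partial_eq : ∀ N : ℕ, ∑ n ∈ Finset.range N, f n = w N := by
    intro N
    induction N with
    | zero => simp [hw]
    | succ k ih =>
      rw [Finset.sum_range_succ, ih]
      have hvs : v (k+1) = v k * ((a + k) * (b + k) / ((c + 1 + k) * (k + 1))) :=
        u_succ a b (c+1) hc1 k
      have hne1 : (c + 1 + (k:ℝ)) ≠ 0 := fun hh => hc1 k (by linarith)
      have hne2 : ((k:ℝ) + 1) ≠ 0 := by positivity
      simp only [hw, hf]
      rw [hvs]
      push_cast
      field_simp
      ring
  -- summability of f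
  have Sf : Summable f := by
    have t1 : Summable (fun n : ℕ => (c - a - b) * ((n:ℝ) * v n)) :=
      (summable_nat_mul_u a b (c+1) hc1 (by linarith)).mul_left _
    have t2 : Summable (fun n : ℕ => (a * b) * v n) := S1.mul_left _
    refine (t1.sub t2).congr fun n => ?_
    simp only [hf]; ring
  -- limit of w is 0
  have hwlim : Tendsto w atTop (𝓝 0) := by
    rw [tendsto_zero_iff_norm_tendsto_zero]
    have hsq := (sq_mul_u_tendsto a b (c+1) hc1 (by linarith)).const_mul (1 + |c|)
    rw [mul_zero] at hsq
    apply squeeze_zero' (g := fun n : ℕ => (1 + |c|) * ((n:ℝ) ^ (2:ℝ) * |u a b (c+1) n|))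
    · filter_upwards with n; positivity
    · filter_upwards [eventually_ge_atTop 1] with n hn
      have hn0 : (0:ℝ) < (n:ℝ) := by exact_mod_cast Nat.lt_of_lt_of_le Nat.zero_lt_one hn
      have habs : ‖w n‖ = (n:ℝ) * |c + n| * |v n| := by
        simp only [hw, Real.norm_eq_abs, abs_mul, abs_neg, abs_of_nonneg hn0.le]
      rw [habs]
      have h2 : (n:ℝ) * |c + n| ≤ (1 + |c|) * (n:ℝ) ^ (2:ℝ) := by
        have : |c + (n:ℝ)| ≤ |c| + (n:ℝ) := by
          calc |c + (n:ℝ)| ≤ |c| + |(n:ℝ)| := abs_add_le c _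
            _ = |c| + (n:ℝ) := by rw [abs_of_nonneg hn0.le]
        have hpow : (n:ℝ) ^ (2:ℝ) = (n:ℝ) * (n:ℝ) := by
          rw [show (2:ℝ) = ((2:ℕ):ℝ) by norm_num, Real.rpow_natCast]; ring
        rw [hpow]
        have h1n : (1:ℝ) ≤ (n:ℝ) := by exact_mod_cast hn
        calc (n:ℝ) * |c + (n:ℝ)| ≤ (n:ℝ) * (|c| + (n:ℝ)) :=
              mul_le_mul_of_nonneg_left this hn0.le
          _ ≤ (1 + |c|) * ((n:ℝ) * (n:ℝ)) := by
              nlinarith [mul_nonneg (abs_nonneg c) (mul_nonneg hn0.le (sub_nonneg.2 h1n))]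
      calc (n:ℝ) * |c + n| * |v n| ≤ ((1 + |c|) * (n:ℝ) ^ (2:ℝ)) * |v n| :=
            mul_le_mul_of_nonneg_right h2 (abs_nonneg _)
        _ = (1 + |c|) * ((n:ℝ) ^ (2:ℝ) * |u a b (c+1) n|) := by rw [hv]; ring
    · exact hsq
  -- tsum f = 0
  have htf : ∑' n, f n = 0 := by
    have h1' := Sf.hasSum.tendsto_sum_nat
    have h2' : Tendsto (fun N => ∑ n ∈ Finset.range N, f n) atTop (𝓝 0) := by
      simpa only [partial_eq] using hwlim
    exact tendsto_nhds_unique h1' h2'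
  -- assemble
  have H1 : HasSum (fun n : ℕ => (c - a - b) * ((c + n) * v n)) ((c - a) * (c - b) * ∑' n, v n) := by
    have hA : HasSum f 0 := htf ▸ Sf.hasSum
    have hB : HasSum (fun n : ℕ => (c - a) * (c - b) * v n) ((c - a) * (c - b) * ∑' n, v n) :=
      S1.hasSum.mul_left _
    have := hA.add hB
    rw [zero_add] at this
    refine this.congr_fun fun n => ?_
    simp only [hf]; ring
  have H2 : HasSum (fun n : ℕ => (c - a - b) * ((c + n) * v n))
      (c * (c - a - b) * ∑' n, u a b c n) := by
    have := S.hasSum.mul_left (c * (c - a - b))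
    refine HasSum.congr_fun this fun n => ?_
    rw [hv, show c * (c - a - b) * u a b c n = (c - a - b) * (c * u a b c n) by ring,
      c_mul_u a b c hc n]
  exact H2.unique H1

lemma hc_add {c : ℝ} (hc : ∀ n : ℕ, c ≠ -(n : ℝ)) (m : ℕ) : ∀ n : ℕ, c + m ≠ -(n : ℝ) := by
  intro n hn
  exact hc (n + m) (by push_cast; linarith)

lemma iterate_rec (a b c : ℝ) (hc : ∀ n : ℕ, c ≠ -(n : ℝ)) (h : 0 < c - a - b) (m : ℕ) :
    (∑' n, u a b c n) =
      (∏ k ∈ Finset.range m, ((c - a + k) * (c - b + k) / ((c + k) * (c - a - b + k)))) *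
        ∑' n, u a b (c + m) n := by
  induction m with
  | zero => simp
  | succ m ih =>
    have hck := hc_add hc m
    have hpos : 0 < (c + m) - a - b := by linarith [Nat.cast_nonneg (α := ℝ) m]
    have hco := contiguous a b (c + m) hck hpos
    have hY1 : (c + (m:ℝ)) ≠ 0 := fun hh => hck 0 (by simpa using hh)
    have hY2 : ((c + m) - a - b) ≠ 0 := ne_of_gt hpos
    have hstep : (∑' n, u a b (c + m) n) =
        ((c - a + m) * (c - b + m) / ((c + m) * (c - a - b + m))) *
          ∑' n, u a b (c + (m + 1 : ℕ)) n := by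
      have hcast : c + ((m + 1 : ℕ) : ℝ) = (c + m) + 1 := by push_cast; ring
      rw [hcast]
      have hQ : (c + (m:ℝ)) * (c - a - b + m) ≠ 0 :=
        mul_ne_zero hY1 (fun hh => hY2 (by linarith))
      rw [div_mul_eq_mul_div, eq_div_iff hQ]
      linear_combination hco
    rw [ih, hstep, Finset.prod_range_succ]
    ring

lemma tendsto_one (a b c : ℝ) (h : 0 < c - a - b) :
    Tendsto (fun m : ℕ => ∑' n, u a b (c + m) n) atTop (𝓝 1) := by
  obtain ⟨M, hM⟩ := exists_nat_gt (1 - c)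
  have hcM1 : (1:ℝ) < c + M := by linarith
  have hcM : ∀ n : ℕ, c + M ≠ -(n : ℝ) := by
    intro n hn
    have : (0:ℝ) ≤ (n:ℝ) := Nat.cast_nonneg n
    linarith
  have hbdd : Summable (fun n : ℕ => |u a b (c + M) n|) :=
    (summable_u a b (c + M) hcM (by linarith [Nat.cast_nonneg (α := ℝ) M])).abs
  have key := tendsto_tsum_of_dominated_convergence
    (𝓕 := (atTop : Filter ℕ))
    (f := fun (m : ℕ) (n : ℕ) => u a b (c + m) n)
    (g := fun n : ℕ => if n = 0 then (1:ℝ) else 0)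
    (bound := fun n : ℕ => |u a b (c + M) n|) hbdd ?_ ?_
  · have hg : ∑' n : ℕ, (if n = 0 then (1:ℝ) else 0) = 1 := by
      rw [tsum_ite_eq]
    rwa [hg] at key
  · -- pointwise limits
    intro k
    rcases Nat.eq_zero_or_pos k with rfl | hk
    · simp only [u_zero, if_pos rfl]
      exact tendsto_const_nhds
    · have hk1 : 1 ≤ k := hk
      simp only [if_neg (Nat.pos_iff_ne_zero.1 hk)]
      have hden : Tendsto (fun m : ℕ => poch (c + m) k * ((k.factorial : ℕ) : ℝ)) atTop atTop := by
        apply Tendsto.atTop_mul_const (by exact_mod_cast Nat.factorial_pos k)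
        refine tendsto_atTop_mono' atTop ?_
          (tendsto_atTop_add_const_left atTop c tendsto_natCast_atTop_atTop)
        filter_upwards [eventually_ge_atTop (M + 1)] with m hm
        have h1 : (1:ℝ) ≤ c + m := by
          have : ((M:ℝ) + 1) ≤ (m:ℝ) := by exact_mod_cast hm
          linarith
        exact le_poch h1 hk1
      have := Tendsto.div_atTop (f := fun _ : ℕ => poch a k * poch b k)
        (tendsto_const_nhds) hden
      refine this.congr fun m => ?_
      rw [u]
  · -- uniform bound
    filter_upwards [eventually_ge_atTop M] with m hm
    intro k
    have hmM : (M:ℝ) ≤ (m:ℝ) := by exact_mod_cast hm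
    have hM0 : (0:ℝ) < c + M := by linarith
    have hm0 : (0:ℝ) < c + m := by linarith
    have hpM : 0 < poch (c + M) k := poch_pos hM0 k
    have hpm : 0 < poch (c + m) k := poch_pos hm0 k
    have hmono : poch (c + M) k ≤ poch (c + m) k := by
      unfold poch
      apply Finset.prod_le_prod
      · intro i _
        have : (0:ℝ) ≤ (i:ℕ) := Nat.cast_nonneg i
        linarith
      · intro i _
        linarith
    have hfk : (0:ℝ) < ((k.factorial : ℕ) : ℝ) := by exact_mod_cast Nat.factorial_pos k
    have habs : ∀ x : ℝ, 0 < poch x k →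
        |u a b x k| = |poch a k * poch b k| / (poch x k * ((k.factorial : ℕ) : ℝ)) := by
      intro x hx
      rw [u, abs_div,
        abs_of_pos (show (0:ℝ) < poch x k * ((k.factorial : ℕ) : ℝ) from mul_pos hx hfk)]
    rw [Real.norm_eq_abs, habs _ hpm, habs _ hpM]
    apply div_le_div_of_nonneg_left (abs_nonneg _) (by positivity)
    apply mul_le_mul_of_nonneg_right hmono hfk.le

lemma prod_eq (a b c : ℝ) (m : ℕ) :
    (∏ k ∈ Finset.range m, ((c - a + k) * (c - b + k) / ((c + k) * (c - a - b + k)))) =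
      poch (c - a) m * poch (c - b) m / (poch c m * poch (c - a - b) m) := by
  unfold poch
  rw [Finset.prod_div_distrib, Finset.prod_mul_distrib, Finset.prod_mul_distrib]

lemma gammaSeq_eq (s : ℝ) (n : ℕ) :
    Real.GammaSeq s n = (n:ℝ) ^ s * (n.factorial : ℝ) / poch s (n + 1) := rfl

lemma gseq_ratio (a b c : ℝ) {n : ℕ} (hn : (0:ℝ) < n)
    (h1 : poch c (n+1) ≠ 0) (h2 : poch (c - a - b) (n+1) ≠ 0)
    (h3 : poch (c - a) (n+1) ≠ 0) (h4 : poch (c - b) (n+1) ≠ 0) :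
    Real.GammaSeq c n * Real.GammaSeq (c - a - b) n /
        (Real.GammaSeq (c - a) n * Real.GammaSeq (c - b) n) =
      poch (c - a) (n+1) * poch (c - b) (n+1) / (poch c (n+1) * poch (c - a - b) (n+1)) := by
  have key : (n:ℝ) ^ (c - a) * (n:ℝ) ^ (c - b) = (n:ℝ) ^ c * (n:ℝ) ^ (c - a - b) := by
    rw [← Real.rpow_add hn, ← Real.rpow_add hn]
    ring_nf
  have hf : ((n.factorial : ℕ) : ℝ) ≠ 0 := by exact_mod_cast Nat.factorial_ne_zero n
  have p1 : (n:ℝ) ^ c ≠ 0 := (Real.rpow_pos_of_pos hn c).ne'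
  have p2 : (n:ℝ) ^ (c - a - b) ≠ 0 := (Real.rpow_pos_of_pos hn _).ne'
  have p3 : (n:ℝ) ^ (c - a) ≠ 0 := (Real.rpow_pos_of_pos hn _).ne'
  have p4 : (n:ℝ) ^ (c - b) ≠ 0 := (Real.rpow_pos_of_pos hn _).ne'
  rw [gammaSeq_eq, gammaSeq_eq, gammaSeq_eq, gammaSeq_eq]
  rw [div_eq_div_iff (by positivity) (mul_ne_zero h1 h2)]
  field_simp
  linear_combination (-1 : ℝ) * key

lemma main_value (a b c : ℝ) (hc : ∀ n : ℕ, c ≠ -(n : ℝ)) (h : 0 < c - a - b) :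
    (∑' n, u a b c n) =
      Real.Gamma c * Real.Gamma (c - a - b) / (Real.Gamma (c - a) * Real.Gamma (c - b)) := by
  set P : ℕ → ℝ :=
    fun m => ∏ k ∈ Finset.range m, ((c - a + k) * (c - b + k) / ((c + k) * (c - a - b + k)))
    with hP
  by_cases hZ : (∃ k : ℕ, c - a = -(k:ℝ)) ∨ (∃ k : ℕ, c - b = -(k:ℝ))
  · -- degenerate case : RHS is 0 and the series terminates to 0
    have hG0 : Real.Gamma (c - a) * Real.Gamma (c - b) = 0 := by
      rcases hZ with ⟨k, hk⟩ | ⟨k, hk⟩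
      · rw [hk, Real.Gamma_neg_nat_eq_zero, zero_mul]
      · rw [hk, Real.Gamma_neg_nat_eq_zero, mul_zero]
    rw [hG0, div_zero]
    rcases hZ with ⟨k, hk⟩ | ⟨k, hk⟩
    · have hpz : poch (c - a) (k+1) = 0 := by
        unfold poch
        apply Finset.prod_eq_zero (Finset.self_mem_range_succ k)
        rw [hk]; ring
      rw [iterate_rec a b c hc h (k+1), prod_eq, hpz]
      simp
    · have hpz : poch (c - b) (k+1) = 0 := by
        unfold poch
        apply Finset.prod_eq_zero (Finset.self_mem_range_succ k)
        rw [hk]; ring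
      rw [iterate_rec a b c hc h (k+1), prod_eq, hpz]
      simp
  · push_neg at hZ
    obtain ⟨hZa, hZb⟩ := hZ
    have hΓa : Real.Gamma (c - a) ≠ 0 := Real.Gamma_ne_zero hZa
    have hΓb : Real.Gamma (c - b) ≠ 0 := Real.Gamma_ne_zero hZb
    -- limit of P
    have hT : Tendsto (fun n : ℕ => Real.GammaSeq c n * Real.GammaSeq (c - a - b) n /
        (Real.GammaSeq (c - a) n * Real.GammaSeq (c - b) n)) atTop
        (𝓝 (Real.Gamma c * Real.Gamma (c - a - b) /
          (Real.Gamma (c - a) * Real.Gamma (c - b)))) :=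
      Tendsto.div
        ((Real.GammaSeq_tendsto_Gamma c).mul (Real.GammaSeq_tendsto_Gamma (c - a - b)))
        ((Real.GammaSeq_tendsto_Gamma (c - a)).mul (Real.GammaSeq_tendsto_Gamma (c - b)))
        (mul_ne_zero hΓa hΓb)
    have hPeq : ∀ᶠ n : ℕ in atTop, Real.GammaSeq c n * Real.GammaSeq (c - a - b) n /
        (Real.GammaSeq (c - a) n * Real.GammaSeq (c - b) n) = P (n + 1) := by
      filter_upwards [eventually_ge_atTop 1] with n hn
      have hn0 : (0:ℝ) < (n:ℝ) := by exact_mod_cast Nat.lt_of_lt_of_le Nat.zero_lt_one hn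
      simp only [hP]
      rw [prod_eq]
      exact gseq_ratio a b c hn0 (poch_ne_zero hc _)
        (poch_pos h _).ne' (poch_ne_zero hZa _) (poch_ne_zero hZb _)
    have hTP : Tendsto (fun n : ℕ => P (n + 1)) atTop
        (𝓝 (Real.Gamma c * Real.Gamma (c - a - b) /
          (Real.Gamma (c - a) * Real.Gamma (c - b)))) :=
      Tendsto.congr' hPeq hT
    have hTP' : Tendsto P atTop (𝓝 (Real.Gamma c * Real.Gamma (c - a - b) /
        (Real.Gamma (c - a) * Real.Gamma (c - b)))) :=
      (tendsto_add_atTop_iff_nat 1).1 hTP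
    -- combine with tendsto_one
    have hcomb : Tendsto (fun m : ℕ => P m * ∑' n, u a b (c + m) n) atTop
        (𝓝 (Real.Gamma c * Real.Gamma (c - a - b) /
          (Real.Gamma (c - a) * Real.Gamma (c - b)) * 1)) :=
      hTP'.mul (tendsto_one a b c h)
    have hconst : (fun m : ℕ => P m * ∑' n, u a b (c + m) n) =
        fun _ : ℕ => ∑' n, u a b c n := by
      funext m
      exact (iterate_rec a b c hc h m).symm
    rw [hconst] at hcomb
    have := tendsto_nhds_unique tendsto_const_nhds hcomb
    rw [this, mul_one]

end GaussAux

theorem gauss_summation (a b c : ℝ) (hc : ∀ n : ℕ, c ≠ -(n : ℝ)) (h : 0 < c - a - b) :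
    Summable (fun n : ℕ => poch a n * poch b n / (poch c n * (n.factorial : ℝ))) ∧
    hyperF a b c 1 =
      Real.Gamma c * Real.Gamma (c - a - b) / (Real.Gamma (c - a) * Real.Gamma (c - b)) := by
  constructor
  · exact GaussAux.summable_u a b c hc h
  · have hmv := GaussAux.main_value a b c hc h
    simp only [GaussAux.u] at hmv
    rw [hyperF]
    simpa [one_pow, mul_one] using hmv
end

section
/- Let d ≥ 1, -d < β < 4-d, and C_β = π^{d/2} Γ((4-β-d)/2)/Γ((4-β)/2). Then for every x ∈ ℝ^d, (1/2)∫_{|y|<1} |x-y|² (1-|y|²)^{(2-β-d)/2} dy = (C_β/2)(|x|² + d/(4-β)). -/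
open Real Set MeasureTheory Metric Module

lemma realBeta_integrableOn {a b : ℝ} (ha : 0 < a) (hb : 0 < b) :
    IntegrableOn (fun x : ℝ => x ^ (a - 1) * (1 - x) ^ (b - 1)) (Ioo 0 1) := by
  have h := (Complex.betaIntegral_convergent (u := (a : ℂ)) (v := (b : ℂ))
    (by simpa using ha) (by simpa using hb)).1
  have h2 := (h.mono_set Ioo_subset_Ioc_self).re
  apply h2.congr
  filter_upwards [ae_restrict_mem measurableSet_Ioo] with y hy
  have h1y : (0:ℝ) ≤ 1 - y := by linarith [hy.2]
  have e1 : ((y : ℂ)) ^ ((a : ℂ) - 1) = ((y ^ (a - 1) : ℝ) : ℂ) := by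
    rw [Complex.ofReal_cpow hy.1.le]; push_cast; ring_nf
  have e2 : ((1 : ℂ) - (y : ℂ)) ^ ((b : ℂ) - 1) = (((1 - y) ^ (b - 1) : ℝ) : ℂ) := by
    rw [show ((1:ℂ) - (y:ℂ)) = (((1 - y : ℝ)) : ℂ) by push_cast; ring,
      Complex.ofReal_cpow h1y]
    push_cast; ring_nf
  simp [e1, e2, ← Complex.ofReal_mul]

lemma realBeta {a b : ℝ} (ha : 0 < a) (hb : 0 < b) :
    ∫ x in Ioo (0:ℝ) 1, x ^ (a - 1) * (1 - x) ^ (b - 1)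
      = Real.Gamma a * Real.Gamma b / Real.Gamma (a + b) := by
  have hcb : Complex.betaIntegral (a : ℂ) (b : ℂ)
      = ((∫ x in Ioo (0:ℝ) 1, x ^ (a - 1) * (1 - x) ^ (b - 1) : ℝ) : ℂ) := by
    rw [Complex.betaIntegral, intervalIntegral.integral_of_le zero_le_one,
      integral_Ioc_eq_integral_Ioo]
    have := setIntegral_congr_fun (μ := volume) (f := fun t : ℝ => (t:ℂ) ^ ((a:ℂ)-1) * (1-(t:ℂ)) ^ ((b:ℂ)-1))
      (g := fun t : ℝ => ((t ^ (a-1) * (1-t) ^ (b-1) : ℝ) : ℂ)) (s := Ioo (0:ℝ) 1) measurableSet_Ioo ?_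
    · rw [this]; exact integral_ofReal
    intro y hy
    have h1y : (0:ℝ) ≤ 1 - y := by linarith [hy.2]
    have e1 : ((y : ℂ)) ^ ((a : ℂ) - 1) = ((y ^ (a - 1) : ℝ) : ℂ) := by
      rw [Complex.ofReal_cpow hy.1.le]; push_cast; ring_nf
    have e2 : ((1 : ℂ) - (y : ℂ)) ^ ((b : ℂ) - 1) = (((1 - y) ^ (b - 1) : ℝ) : ℂ) := by
      rw [show ((1:ℂ) - (y:ℂ)) = (((1 - y : ℝ)) : ℂ) by push_cast; ring,
        Complex.ofReal_cpow h1y]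
      push_cast; ring_nf
    simp [e1, e2, ← Complex.ofReal_mul]
  have hg := Complex.Gamma_mul_Gamma_eq_betaIntegral
    (s := (a : ℂ)) (t := (b : ℂ)) (by simpa using ha) (by simpa using hb)
  rw [hcb, show ((a:ℂ) + (b:ℂ)) = (((a + b : ℝ)) : ℂ) by push_cast; ring,
    Complex.Gamma_ofReal, Complex.Gamma_ofReal, Complex.Gamma_ofReal,
    ← Complex.ofReal_mul, ← Complex.ofReal_mul] at hg
  have hg' := Complex.ofReal_injective hg
  have hne : Real.Gamma (a + b) ≠ 0 := (Real.Gamma_pos_of_pos (by linarith)).ne'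
  field_simp
  linarith [hg']


lemma aux_integrable {E : Type*} [NormedAddCommGroup E] [NormedSpace ℝ E]
    [MeasurableSpace E] [BorelSpace E] [FiniteDimensional ℝ E] [Nontrivial E]
    (μ : Measure E) [μ.IsAddHaarMeasure] (f : ℝ → ℝ)
    (hf : IntegrableOn (fun y => y ^ (finrank ℝ E - 1) * f y) (Ioi (0:ℝ))) :
    Integrable (fun x => f ‖x‖) μ := by
  have h0 : MeasurableSet ({(0:E)}ᶜ) := (measurableSet_singleton _).compl
  have key : Integrable (f ∘ Subtype.val ∘ Prod.snd)
      (μ.toSphere.prod (.volumeIoiPow (finrank ℝ E - 1))) := by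
    have h2 : Integrable (f ∘ Subtype.val) (Measure.volumeIoiPow (finrank ℝ E - 1)) := by
      have hdef : Measure.volumeIoiPow (finrank ℝ E - 1)
          = (Measure.comap Subtype.val volume).withDensity
            (fun r : Ioi (0:ℝ) => ENNReal.ofReal (r.1 ^ (finrank ℝ E - 1))) := rfl
      rw [hdef, integrable_withDensity_iff_integrable_smul'
        ((measurable_subtype_coe.pow_const _).ennreal_ofReal)
        (Filter.Eventually.of_forall fun r => ENNReal.ofReal_lt_top)]
      have heq : (fun r : Ioi (0:ℝ) =>
          (ENNReal.ofReal (r.1 ^ (finrank ℝ E - 1))).toReal • (f ∘ Subtype.val) r)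
          = (fun y : ℝ => (ENNReal.ofReal (y ^ (finrank ℝ E - 1))).toReal • f y)
            ∘ Subtype.val := rfl
      rw [heq, ← (MeasurableEmbedding.subtype_coe measurableSet_Ioi).integrable_map_iff,
        map_comap_subtype_coe measurableSet_Ioi]
      refine hf.congr_fun (fun y hy => ?_) measurableSet_Ioi
      simp [ENNReal.toReal_ofReal (pow_nonneg (le_of_lt hy) _), smul_eq_mul]
    have h1 : Integrable (fun _ : sphere (0:E) 1 => (1:ℝ)) μ.toSphere :=
      integrable_const 1
    have := h1.smul_prod h2
    simp at this; exact this
  have := (μ.measurePreserving_homeomorphUnitSphereProd.integrable_comp_emb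
    (Homeomorph.measurableEmbedding _)).2 key
  have h3 : Integrable ((fun x : E => f ‖x‖) ∘ (Subtype.val : ({(0:E)}ᶜ : Set E) → E))
      (Measure.comap Subtype.val μ) := by
    convert this using 1; funext z; simp [homeomorphUnitSphereProd]
  rw [← restrict_compl_singleton (μ := μ) (0:E), ← map_comap_subtype_coe h0,
    (MeasurableEmbedding.subtype_coe h0).integrable_map_iff]
  exact h3

lemma oneDim_integrableOn (m : ℕ) {s : ℝ} (hs : -1 < s) :
    IntegrableOn (fun y : ℝ => y ^ m * (1 - y ^ 2) ^ s) (Ioo 0 1) := by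
  have hone : IntegrableOn (fun y : ℝ => (1 - y) ^ s) (Ioo (0:ℝ) 1) := by
    refine (realBeta_integrableOn one_pos (by linarith : (0:ℝ) < s + 1)).congr_fun
      (fun y hy => ?_) measurableSet_Ioo
    dsimp only
    rw [sub_self, Real.rpow_zero, one_mul, add_sub_cancel_right]
  set c : ℝ := max 1 (2 ^ s) with hc
  have hc1 : (1:ℝ) ≤ c := le_max_left _ _
  refine ((hone.const_mul c).mono ?_ ?_)
  · refine (ContinuousOn.aestronglyMeasurable ?_ measurableSet_Ioo)
    refine ((continuous_pow m).continuousOn.mul (ContinuousOn.rpow_const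
      ((continuous_const.sub (continuous_pow 2)).continuousOn) fun y hy => Or.inl ?_))
    have : y ^ 2 < 1 := by nlinarith [hy.1, hy.2]
    nlinarith
  · filter_upwards [ae_restrict_mem measurableSet_Ioo] with y hy
    have h0 : (0:ℝ) < y := hy.1
    have h1 : y < 1 := hy.2
    have hsub : (0:ℝ) < 1 - y := by linarith
    have hadd : (0:ℝ) < 1 + y := by linarith
    have hsq : (1:ℝ) - y ^ 2 = (1 - y) * (1 + y) := by ring
    have hys : (0:ℝ) < 1 - y ^ 2 := by nlinarith
    rw [Real.norm_eq_abs, Real.norm_eq_abs,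
      abs_of_nonneg (by positivity : (0:ℝ) ≤ y ^ m * (1 - y ^ 2) ^ s),
      abs_of_nonneg (by positivity : (0:ℝ) ≤ c * (1 - y) ^ s)]
    rw [hsq, Real.mul_rpow hsub.le hadd.le]
    have hym : y ^ m ≤ 1 := pow_le_one₀ h0.le h1.le
    have hcy : (1 + y) ^ s ≤ c := by
      rcases le_or_gt 0 s with hs0 | hs0
      · calc (1 + y) ^ s ≤ (2:ℝ) ^ s :=
              Real.rpow_le_rpow (by linarith) (by linarith) hs0
          _ ≤ c := le_max_right _ _
      · calc (1 + y) ^ s ≤ 1 :=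
              Real.rpow_le_one_of_one_le_of_nonpos (by linarith) hs0.le
          _ ≤ c := hc1
    have hpos : (0:ℝ) ≤ (1 - y) ^ s := Real.rpow_nonneg hsub.le s
    calc y ^ m * ((1 - y) ^ s * (1 + y) ^ s)
        ≤ 1 * ((1 - y) ^ s * c) := by
          apply mul_le_mul hym (mul_le_mul_of_nonneg_left hcy hpos) (by positivity)
          norm_num
      _ = c * (1 - y) ^ s := by ring

lemma ball_integrableOn (d : ℕ) (hd : 1 ≤ d) (k : ℕ) {s : ℝ} (hs : -1 < s) :
    IntegrableOn (fun y : EuclideanSpace ℝ (Fin d) => ‖y‖ ^ k * (1 - ‖y‖ ^ 2) ^ s)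
      (Metric.ball 0 1) := by
  haveI : Nontrivial (EuclideanSpace ℝ (Fin d)) :=
    Module.nontrivial_of_finrank_pos (R := ℝ)
      (by rw [finrank_euclideanSpace_fin]; omega)
  set f : ℝ → ℝ := Set.indicator (Iio (1:ℝ)) (fun r => r ^ k * (1 - r ^ 2) ^ s) with hf
  have haux : Integrable (fun y : EuclideanSpace ℝ (Fin d) => f ‖y‖) volume := by
    apply aux_integrable volume f
    have hbase : IntegrableOn
        (Set.indicator (Ioo (0:ℝ) 1) fun y : ℝ => y ^ (d - 1 + k) * (1 - y ^ 2) ^ s)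
        (Ioi (0:ℝ)) :=
      ((integrable_indicator_iff measurableSet_Ioo).mpr
        (oneDim_integrableOn (d - 1 + k) hs)).integrableOn
    refine hbase.congr_fun (fun y hy => ?_) measurableSet_Ioi
    have hy0 : (0:ℝ) < y := hy
    rw [finrank_euclideanSpace_fin]
    by_cases h1 : y < 1
    · rw [Set.indicator_of_mem (by exact ⟨hy0, h1⟩), hf,
        Set.indicator_of_mem (by exact h1), pow_add]
      ring
    · rw [Set.indicator_of_notMem (fun hmem => h1 hmem.2), hf,
        Set.indicator_of_notMem (by simpa using h1)]
      ring
  refine haux.integrableOn.congr_fun (fun y hy => ?_) measurableSet_ball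
  rw [hf]; dsimp only; rw [Set.indicator_of_mem (by simpa [mem_ball_zero_iff] using hy)]

lemma ball_integral (d : ℕ) (hd : 1 ≤ d) (k : ℕ) {s : ℝ} (hs : -1 < s) :
    ∫ y in Metric.ball (0 : EuclideanSpace ℝ (Fin d)) 1, ‖y‖ ^ k * (1 - ‖y‖ ^ 2) ^ s =
      π ^ ((d:ℝ)/2) * (Real.Gamma (((d:ℝ)+k)/2) * Real.Gamma (s+1) /
        (Real.Gamma ((d:ℝ)/2) * Real.Gamma (((d:ℝ)+k)/2 + (s+1)))) := by
  haveI : Nonempty (Fin d) := ⟨⟨0, hd⟩⟩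
  haveI : Nontrivial (EuclideanSpace ℝ (Fin d)) :=
    Module.nontrivial_of_finrank_pos (R := ℝ)
      (by rw [finrank_euclideanSpace_fin]; omega)
  have hd0 : (0:ℝ) < d := by exact_mod_cast hd
  set f : ℝ → ℝ := Set.indicator (Iio (1:ℝ)) (fun r => r ^ k * (1 - r ^ 2) ^ s) with hf
  have h1 : ∫ y in Metric.ball (0 : EuclideanSpace ℝ (Fin d)) 1, ‖y‖ ^ k * (1 - ‖y‖ ^ 2) ^ s
      = ∫ y : EuclideanSpace ℝ (Fin d), f ‖y‖ := by
    rw [← integral_indicator measurableSet_ball]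
    congr 1
    funext y
    by_cases hy : y ∈ Metric.ball (0 : EuclideanSpace ℝ (Fin d)) 1
    · rw [Set.indicator_of_mem hy, hf,
        Set.indicator_of_mem (by simpa [mem_ball_zero_iff] using hy)]
    · rw [Set.indicator_of_notMem hy, hf,
        Set.indicator_of_notMem (by simpa [mem_ball_zero_iff] using hy)]
  rw [h1, integral_fun_norm_addHaar volume f]
  simp only [finrank_euclideanSpace_fin]
  -- the inner one-dimensional integral
  set a : ℝ := ((d:ℝ)+k)/2 with ha
  have ha0 : 0 < a := by positivity
  set G : ℝ → ℝ := Set.indicator (Iio (1:ℝ))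
    (fun u => (1/2 : ℝ) * (u ^ (a - 1) * (1-u) ^ s)) with hG
  have h3 : ∫ r in Ioi (0:ℝ), r ^ (d - 1) • f r = ∫ u in Ioi (0:ℝ), G u := by
    rw [← integral_comp_rpow_Ioi_of_pos (g := G) two_pos]
    refine setIntegral_congr_fun measurableSet_Ioi (fun r hr => ?_)
    have hr0 : (0:ℝ) < r := hr
    have hrsq : r ^ ((2:ℝ):ℝ) = r ^ (2:ℕ) := by
      rw [← Real.rpow_natCast r 2]; norm_num
    by_cases hlt : r < 1
    · have hmem : r ^ ((2:ℝ)) ∈ Iio (1:ℝ) := by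
        rw [hrsq]; simpa [abs_of_pos hr0] using (sq_lt_one_iff_abs_lt_one (a := r)).2
          (by rw [abs_of_pos hr0]; exact hlt)
      rw [hf, hG]
      rw [Set.indicator_of_mem (by exact hlt), Set.indicator_of_mem hmem]
      have key : r ^ (d - 1 : ℕ) * r ^ (k:ℕ) = (2 * r ^ ((2:ℝ) - 1)) * ((1/2) * (r ^ ((2:ℝ))) ^ (a - 1)) := by
        have h2a : (2:ℝ) * (a - 1) = (d:ℝ) + k - 2 := by rw [ha]; ring
        have e1 : (r ^ ((2:ℝ))) ^ (a - 1) = r ^ ((d:ℝ) + k - 2) := by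
          rw [← Real.rpow_mul hr0.le, h2a]
        have e2 : r ^ (d - 1 : ℕ) * r ^ (k:ℕ) = r ^ ((d:ℝ) + k - 1) := by
          rw [← Real.rpow_natCast r (d-1), ← Real.rpow_natCast r k,
            ← Real.rpow_add hr0]
          congr 1
          have : ((d - 1 : ℕ) : ℝ) = (d:ℝ) - 1 := by
            have := Nat.cast_sub (le_trans (by norm_num) hd) (R := ℝ) (m := 1) (n := d)
            simpa using this
          rw [this]; ring
        rw [e1, e2]
        rw [show (2:ℝ) * r ^ ((2:ℝ)-1) * (1/2 * r ^ ((d:ℝ)+k-2)) = r ^ ((2:ℝ)-1) * r ^ ((d:ℝ)+k-2) by ring,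
          ← Real.rpow_add hr0]
        congr 1
        ring
      rw [smul_eq_mul, smul_eq_mul]
      have hsq' : (1:ℝ) - r ^ ((2:ℝ)) = 1 - r ^ (2:ℕ) := by rw [hrsq]
      rw [hsq']
      calc r ^ (d-1) * (r ^ k * (1 - r ^ (2:ℕ)) ^ s)
          = (r ^ (d - 1 : ℕ) * r ^ (k:ℕ)) * (1 - r ^ (2:ℕ)) ^ s := by ring
        _ = ((2 * r ^ ((2:ℝ) - 1)) * ((1/2) * (r ^ ((2:ℝ))) ^ (a - 1))) * (1 - r ^ (2:ℕ)) ^ s := by rw [key]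
        _ = 2 * r ^ ((2:ℝ) - 1) * (1/2 * ((r ^ ((2:ℝ))) ^ (a-1) * (1 - r ^ (2:ℕ)) ^ s)) := by ring
    · have hge : (1:ℝ) ≤ r := not_lt.1 hlt
      have hmem : r ^ ((2:ℝ)) ∉ Iio (1:ℝ) := by
        rw [hrsq]; simp only [mem_Iio, not_lt]
        nlinarith
      rw [hf, hG, Set.indicator_of_notMem (by exact hlt : r ∉ Iio (1:ℝ)),
        Set.indicator_of_notMem hmem]
      rw [smul_zero, smul_zero]
  rw [h3]
  have h4 : ∫ u in Ioi (0:ℝ), G u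
      = (1/2 : ℝ) * ∫ u in Ioo (0:ℝ) 1, u ^ (a - 1) * (1-u) ^ s := by
    rw [hG, setIntegral_indicator measurableSet_Iio, Ioi_inter_Iio, integral_const_mul]
  rw [h4]
  have h5 : ∫ u in Ioo (0:ℝ) 1, u ^ (a - 1) * (1-u) ^ s
      = Real.Gamma a * Real.Gamma (s+1) / Real.Gamma (a + (s+1)) := by
    rw [← realBeta ha0 (by linarith : (0:ℝ) < s + 1)]
    refine setIntegral_congr_fun measurableSet_Ioo (fun u hu => ?_)
    rw [add_sub_cancel_right]
  rw [h5]
  -- the volume of the unit ball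
  have hvol : (volume (Metric.ball (0 : EuclideanSpace ℝ (Fin d)) 1)).toReal
      = π ^ ((d:ℝ)/2) / Real.Gamma ((d:ℝ)/2 + 1) := by
    rw [EuclideanSpace.volume_ball]
    simp only [Fintype.card_fin, ENNReal.ofReal_one, one_pow, one_mul]
    rw [ENNReal.toReal_ofReal (by positivity)]
    congr 1
    rw [Real.sqrt_eq_rpow, ← Real.rpow_natCast (π ^ ((1:ℝ)/2)) d, ← Real.rpow_mul pi_pos.le]
    congr 1; ring
  rw [measureReal_def, hvol, nsmul_eq_mul, smul_eq_mul]
  have hΓd : Real.Gamma ((d:ℝ)/2) ≠ 0 := (Real.Gamma_pos_of_pos (by positivity)).ne'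
  have hrec : Real.Gamma ((d:ℝ)/2 + 1) = ((d:ℝ)/2) * Real.Gamma ((d:ℝ)/2) :=
    Real.Gamma_add_one (by positivity)
  have hΓab : Real.Gamma (a + (s+1)) ≠ 0 :=
    (Real.Gamma_pos_of_pos (by have := ha0; linarith)).ne'
  rw [hrec]
  have hπ : (0:ℝ) < π ^ ((d:ℝ)/2) := Real.rpow_pos_of_pos pi_pos _
  field_simp

theorem quadratic_potential (d : ℕ) (hd : 1 ≤ d) (β : ℝ) (hβl : -(d : ℝ) < β)
    (hβu : β < 4 - (d : ℝ))
    (C : ℝ)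
    (hC : C = Real.pi ^ ((d : ℝ) / 2) * Real.Gamma ((4 - β - (d : ℝ)) / 2) /
      Real.Gamma ((4 - β) / 2)) :
    ∀ x : EuclideanSpace ℝ (Fin d),
      (1 / 2) * ∫ y in Metric.ball (0 : EuclideanSpace ℝ (Fin d)) 1,
          ‖x - y‖ ^ 2 * (1 - ‖y‖ ^ 2) ^ ((2 - β - (d : ℝ)) / 2) =
        C / 2 * (‖x‖ ^ 2 + (d : ℝ) / (4 - β)) := by
  intro x
  have hd0 : (0:ℝ) < d := by exact_mod_cast hd
  set s : ℝ := (2 - β - (d : ℝ)) / 2 with hsdef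
  have hs : -1 < s := by rw [hsdef]; linarith
  have hs1 : (0:ℝ) < s + 1 := by linarith
  have h4β : (0:ℝ) < 4 - β := by linarith
  set w : EuclideanSpace ℝ (Fin d) → ℝ := fun y => (1 - ‖y‖ ^ 2) ^ s with hw
  -- integrability facts
  have J0 : IntegrableOn w (Metric.ball 0 1) := by
    refine (ball_integrableOn d hd 0 hs).congr_fun (fun y _ => ?_) measurableSet_ball
    simp [hw]
  have J2 : IntegrableOn (fun y : EuclideanSpace ℝ (Fin d) => ‖y‖ ^ 2 * w y)
      (Metric.ball 0 1) := ball_integrableOn d hd 2 hs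
  have Jin : IntegrableOn
      (fun y : EuclideanSpace ℝ (Fin d) => (inner ℝ x y : ℝ) * w y) (Metric.ball 0 1) := by
    refine (J0.const_mul ‖x‖).mono ?_ ?_
    · refine ContinuousOn.aestronglyMeasurable ?_ measurableSet_ball
      refine ((continuous_const.inner continuous_id).continuousOn.mul
        (ContinuousOn.rpow_const ?_ fun y hy => Or.inl ?_))
      · exact (continuous_const.sub ((continuous_norm).pow 2)).continuousOn
      · have : ‖y‖ < 1 := by simpa [mem_ball_zero_iff] using hy
        have h2 : ‖y‖ ^ 2 < 1 := by nlinarith [norm_nonneg y]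
        nlinarith
    · filter_upwards [ae_restrict_mem measurableSet_ball] with y hy
      have hy1 : ‖y‖ < 1 := by simpa [mem_ball_zero_iff] using hy
      have hwpos : (0:ℝ) ≤ w y := by
        apply Real.rpow_nonneg; nlinarith [norm_nonneg y]
      rw [Real.norm_eq_abs, Real.norm_eq_abs, abs_mul, abs_mul,
        abs_of_nonneg hwpos, abs_of_nonneg (norm_nonneg x)]
      apply mul_le_mul_of_nonneg_right _ hwpos
      calc |(inner ℝ x y : ℝ)| ≤ ‖x‖ * ‖y‖ := abs_real_inner_le_norm x y
        _ ≤ ‖x‖ * 1 := by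
            exact mul_le_mul_of_nonneg_left hy1.le (norm_nonneg x)
        _ = ‖x‖ := mul_one _
  -- cross term is zero
  have hodd : ∫ y in Metric.ball (0 : EuclideanSpace ℝ (Fin d)) 1,
      (inner ℝ x y : ℝ) * w y = 0 := by
    have hmp : MeasurePreserving (fun y : EuclideanSpace ℝ (Fin d) => -y)
        volume volume := Measure.measurePreserving_neg volume
    have hemb : MeasurableEmbedding (fun y : EuclideanSpace ℝ (Fin d) => -y) :=
      (Homeomorph.neg (EuclideanSpace ℝ (Fin d))).measurableEmbedding
    have h := hmp.setIntegral_preimage_emb hemb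
      (fun y => (inner ℝ x y : ℝ) * w y) (Metric.ball 0 1)
    have hpre : (fun y : EuclideanSpace ℝ (Fin d) => -y) ⁻¹' (Metric.ball 0 1)
        = Metric.ball 0 1 := by
      ext y; simp [mem_ball_zero_iff]
    rw [hpre] at h
    have h2 : ∫ y in Metric.ball (0 : EuclideanSpace ℝ (Fin d)) 1,
        (inner ℝ x y : ℝ) * w y
        = - ∫ y in Metric.ball (0 : EuclideanSpace ℝ (Fin d)) 1,
        (inner ℝ x y : ℝ) * w y := by
      conv_lhs => rw [← h]
      rw [← integral_neg]
      refine setIntegral_congr_fun measurableSet_ball (fun y _ => ?_)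
      simp [hw, inner_neg_right, norm_neg, neg_mul]
    linarith
  -- expand the square
  have hsplit : (fun y : EuclideanSpace ℝ (Fin d) => ‖x - y‖ ^ 2 * w y)
      = fun y => (‖x‖ ^ 2 * w y + ‖y‖ ^ 2 * w y) + (-2) * ((inner ℝ x y : ℝ) * w y) := by
    funext y
    rw [@norm_sub_sq_real (EuclideanSpace ℝ (Fin d)) _ _ x y]
    ring
  have hIval : ∫ y in Metric.ball (0 : EuclideanSpace ℝ (Fin d)) 1, ‖x - y‖ ^ 2 * w y
      = ‖x‖ ^ 2 * (∫ y in Metric.ball (0 : EuclideanSpace ℝ (Fin d)) 1, w y)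
        + ∫ y in Metric.ball (0 : EuclideanSpace ℝ (Fin d)) 1, ‖y‖ ^ 2 * w y := by
    have hA : IntegrableOn (fun y : EuclideanSpace ℝ (Fin d) => ‖x‖ ^ 2 * w y)
        (Metric.ball 0 1) := J0.const_mul _
    have hAB : IntegrableOn (fun y : EuclideanSpace ℝ (Fin d) =>
        ‖x‖ ^ 2 * w y + ‖y‖ ^ 2 * w y) (Metric.ball 0 1) := hA.add J2
    have hCc : IntegrableOn (fun y : EuclideanSpace ℝ (Fin d) =>
        (-2 : ℝ) * ((inner ℝ x y : ℝ) * w y)) (Metric.ball 0 1) := Jin.const_mul _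
    rw [hsplit, integral_add hAB hCc, integral_add hA J2, integral_const_mul,
      integral_const_mul, hodd]
    ring
  -- values of the radial integrals
  have hΓd : Real.Gamma ((d:ℝ)/2) ≠ 0 := (Real.Gamma_pos_of_pos (by positivity)).ne'
  have hΓ4 : Real.Gamma ((4-β)/2) ≠ 0 := (Real.Gamma_pos_of_pos (by linarith)).ne'
  have e1 : s + 1 = (4 - β - (d:ℝ))/2 := by rw [hsdef]; ring
  have hI0 : ∫ y in Metric.ball (0 : EuclideanSpace ℝ (Fin d)) 1, w y = C := by
    have h := ball_integral d hd 0 hs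
    simp only [pow_zero, one_mul, Nat.cast_zero, add_zero] at h
    simp only [hw]
    rw [h, hC, e1, show ((d:ℝ))/2 + (4 - β - (d:ℝ))/2 = (4-β)/2 by ring]
    field_simp
  have hI2 : ∫ y in Metric.ball (0 : EuclideanSpace ℝ (Fin d)) 1, ‖y‖ ^ 2 * w y
      = C * ((d:ℝ) / (4 - β)) := by
    have h := ball_integral d hd 2 hs
    simp only [hw]
    rw [h]
    have e2 : ((d:ℝ) + (2:ℕ))/2 = (d:ℝ)/2 + 1 := by push_cast; ring
    have e3 : (d:ℝ)/2 + 1 + (s+1) = (4-β)/2 + 1 := by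
      rw [hsdef]; ring
    rw [e2, e3, Real.Gamma_add_one (by positivity : ((d:ℝ)/2) ≠ 0),
      Real.Gamma_add_one (by positivity : ((4-β)/2) ≠ 0), hC, e1]
    field_simp
  rw [hIval, hI0, hI2]
  ring
end

section
/- Let d ≥ 2, 2 ≤ α ≤ 4, and -d + 3 < β < -d + 4 with β ≥ β_*(α) := (-10+3α+7d-αd-d²)/(d+α-3). Then (α/2 - 1)·((d+β-3)(d+α-4))/((d+α-3)(d+β-4)) - (β/2 - 1) ≤ 0. -/
open Real Set MeasureTheory

/-!
Multiplying by the negative denominator `(d + α - 3) (d + β - 4)` turns the claim into the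
nonnegativity of a quadratic in `β` with leading coefficient `-(d + α - 3) < 0` and roots
`α` and `β_*(α)`. Since `β_*(α) ≤ β < 4 - d ≤ 2 ≤ α`, the parameter `β` lies between the
roots.
-/

theorem quadratic_in_beta_factor (x α β : ℝ) :
    (α - 2) * ((x + β - 3) * (x + α - 4)) - (β - 2) * ((x + α - 3) * (x + β - 4)) =
      (α - β) * (β * (x + α - 3) - (-10 + 3 * α + 7 * x - α * x - x ^ 2)) := by
  ring

theorem psi_second_deriv_sign_general (d : ℕ) (hd : 2 ≤ d) (α β : ℝ) (hα₂ : 2 ≤ α)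
    (hβu : β < -(d : ℝ) + 4)
    (hβs : (-10 + 3 * α + 7 * (d : ℝ) - α * (d : ℝ) - (d : ℝ) ^ 2) / ((d : ℝ) + α - 3) ≤ β) :
    (α / 2 - 1) * (((d : ℝ) + β - 3) * ((d : ℝ) + α - 4)) /
        (((d : ℝ) + α - 3) * ((d : ℝ) + β - 4)) - (β / 2 - 1) ≤ 0 := by
  have hd₂ : (2 : ℝ) ≤ d := by exact_mod_cast hd
  have hA : 0 < (d : ℝ) + α - 3 := by linarith
  have hC : (d : ℝ) + β - 4 < 0 := by linarith
  have hβα : 0 ≤ α - β := by linarith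
  have hβ_star : 0 ≤ β * ((d : ℝ) + α - 3) -
      (-10 + 3 * α + 7 * (d : ℝ) - α * (d : ℝ) - (d : ℝ) ^ 2) :=
    sub_nonneg.2 ((div_le_iff₀ hA).1 hβs)
  rw [sub_nonpos, div_le_iff_of_neg (mul_neg_of_pos_of_neg hA hC)]
  linear_combination (mul_nonneg hβα hβ_star - quadratic_in_beta_factor d α β) / 2

theorem psi_second_deriv_sign (d : ℕ) (hd : 2 ≤ d) (α β : ℝ) (hα₂ : 2 ≤ α) (hα₄ : α ≤ 4)
    (hβl : -(d : ℝ) + 3 < β) (hβu : β < -(d : ℝ) + 4)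
    (hβs : (-10 + 3 * α + 7 * (d : ℝ) - α * (d : ℝ) - (d : ℝ) ^ 2) / ((d : ℝ) + α - 3) ≤ β) :
    (α / 2 - 1) * (((d : ℝ) + β - 3) * ((d : ℝ) + α - 4)) /
        (((d : ℝ) + α - 3) * ((d : ℝ) + β - 4)) - (β / 2 - 1) ≤ 0 :=
  psi_second_deriv_sign_general d hd α β hα₂ hβu hβs
end
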